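/- arXiv:2307.06039 — 2 statements merged into one kernel-verified Lean document; each statement's English description precedes it below -/
import Mathlib

section
/- Let K be a field of characteristic 0 in which the equation a² + b² + 1 = 0 has a solution. Then the assignment i ↦ [[a, b], [b, −a]], j ↦ [[b, −a], [−a, −b]], k ↦ [[0, 1], [−1, 0]] defines a 2-dimensional representation of the quaternion group Q₈ over K, realizing its 2-dimensional irreducible representation over K. -/
open Matrix

noncomputable section

variable {G : Type*} [Group G] {n : ℕ}

/-- The Galois-conjugate representation `π^σ`, obtained by applying the field
automorphism `σ` of `ℂ` to all matrix entries. -/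
def repConj (σ : ℂ ≃+* ℂ) (π : G →* GL (Fin n) ℂ) : G →* GL (Fin n) ℂ :=
  (Matrix.GeneralLinearGroup.map (σ : ℂ →+* ℂ)).comp π

/-- Isomorphism (conjugacy) of matrix representations. -/
def RepEquiv (π₁ π₂ : G →* GL (Fin n) ℂ) : Prop :=
  ∃ M : GL (Fin n) ℂ, ∀ g, M * π₁ g * M⁻¹ = π₂ g

/-- The field of rationality `ℚ(π)`: the fixed field of the group of automorphisms
`σ` of `ℂ` such that `π^σ ≅ π`. -/
def fieldOfRationality (π : G →* GL (Fin n) ℂ) : Subfield ℂ where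
  carrier := {z | ∀ σ : ℂ ≃+* ℂ, RepEquiv (repConj σ π) π → σ z = z}
  zero_mem' := fun σ _ => map_zero σ
  one_mem' := fun σ _ => map_one σ
  add_mem' := fun {a b} ha hb σ h => by rw [map_add, ha σ h, hb σ h]
  mul_mem' := fun {a b} ha hb σ h => by rw [_root_.map_mul, ha σ h, hb σ h]
  neg_mem' := fun {a} ha σ h => by rw [map_neg, ha σ h]
  inv_mem' := fun a ha σ h => by rw [map_inv₀, ha σ h]

/-- `π` is defined over the subfield `K ⊆ ℂ`: it is isomorphic to the extension of
scalars of a `K`-rational representation. -/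
def DefinedOver (π : G →* GL (Fin n) ℂ) (K : Subfield ℂ) : Prop :=
  ∃ π₀ : G →* GL (Fin n) K,
    RepEquiv ((Matrix.GeneralLinearGroup.map (K.subtype)).comp π₀) π

/-- Irreducibility of a matrix representation. -/
def IsIrreducibleRep (π : G →* GL (Fin n) ℂ) : Prop :=
  ∀ W : Submodule ℂ (Fin n → ℂ),
    (∀ g, W.map ((π g : Matrix (Fin n) (Fin n) ℂ).mulVecLin) ≤ W) → W = ⊥ ∨ W = ⊤

/-- `ℚ{π}`: the `ℚ`-subalgebra of matrices spanned by the image of `π`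
(as the image is multiplicatively closed, this is the `ℚ`-span of the image). -/
def Qspan (π : G →* GL (Fin n) ℂ) : Subalgebra ℚ (Matrix (Fin n) (Fin n) ℂ) :=
  Algebra.adjoin ℚ {M | ∃ g, (π g : Matrix (Fin n) (Fin n) ℂ) = M}


section Q8Aux

variable {K : Type*} [Field K]

private lemma auxMi2 {a b : K} (h : a ^ 2 + b ^ 2 + 1 = 0) :
    !![a, b; b, -a] * !![a, b; b, -a] = (-1 : Matrix (Fin 2) (Fin 2) K) := by
  ext i j
  fin_cases i <;> fin_cases j <;>
    simp [Matrix.mul_apply, Fin.sum_univ_two] <;>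
    first | ring1 | linear_combination h | linear_combination -h |
      linear_combination (2:K)*h | linear_combination (-2:K)*h

private lemma auxMj2 {a b : K} (h : a ^ 2 + b ^ 2 + 1 = 0) :
    !![b, -a; -a, -b] * !![b, -a; -a, -b] = (-1 : Matrix (Fin 2) (Fin 2) K) := by
  ext i j
  fin_cases i <;> fin_cases j <;>
    simp [Matrix.mul_apply, Fin.sum_univ_two] <;>
    first | ring1 | linear_combination h | linear_combination -h |
      linear_combination (2:K)*h | linear_combination (-2:K)*h

private lemma auxMiMj {a b : K} (h : a ^ 2 + b ^ 2 + 1 = 0) :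
    !![a, b; b, -a] * !![b, -a; -a, -b] = (!![0, 1; -1, 0] : Matrix (Fin 2) (Fin 2) K) := by
  ext i j
  fin_cases i <;> fin_cases j <;>
    simp [Matrix.mul_apply, Fin.sum_univ_two] <;>
    first | ring1 | linear_combination h | linear_combination -h |
      linear_combination (2:K)*h | linear_combination (-2:K)*h

private lemma auxMjMi {a b : K} (h : a ^ 2 + b ^ 2 + 1 = 0) :
    !![b, -a; -a, -b] * !![a, b; b, -a] = (!![0, -1; 1, 0] : Matrix (Fin 2) (Fin 2) K) := by
  ext i j
  fin_cases i <;> fin_cases j <;>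
    simp [Matrix.mul_apply, Fin.sum_univ_two] <;>
    first | ring1 | linear_combination h | linear_combination -h |
      linear_combination (2:K)*h | linear_combination (-2:K)*h

private def auxI {a b : K} (h : a ^ 2 + b ^ 2 + 1 = 0) : GL (Fin 2) K :=
  ⟨!![a, b; b, -a], -!![a, b; b, -a],
   by rw [mul_neg, auxMi2 h, neg_neg],
   by rw [neg_mul, auxMi2 h, neg_neg]⟩

private def auxJ {a b : K} (h : a ^ 2 + b ^ 2 + 1 = 0) : GL (Fin 2) K :=
  ⟨!![b, -a; -a, -b], -!![b, -a; -a, -b],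
   by rw [mul_neg, auxMj2 h, neg_neg],
   by rw [neg_mul, auxMj2 h, neg_neg]⟩

variable {a b : K} (h : a ^ 2 + b ^ 2 + 1 = 0)

private lemma hI2 : auxI h * auxI h = -1 :=
  Units.ext (by simp [auxI, auxMi2 h])

private lemma hJ2 : auxJ h * auxJ h = -1 :=
  Units.ext (by simp [auxJ, auxMj2 h])

private lemma hIJ : auxI h * auxJ h = -(auxJ h * auxI h) := by
  refine Units.ext ?_
  simp only [Units.val_mul, Units.val_neg, auxI, auxJ, auxMiMj h, auxMjMi h]
  ext i j; fin_cases i <;> fin_cases j <;> simp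

private lemma hIsq : auxI h ^ 2 = -1 := by rw [sq]; exact hI2 h

private lemma hI3 : auxI h ^ 3 = -auxI h := by
  rw [pow_succ, hIsq h, neg_one_mul]

private lemma hI4 : auxI h ^ 4 = 1 := by
  rw [show (4:ℕ) = 2+2 from rfl, pow_add, hIsq h, neg_one_mul, neg_neg]

private lemma powCongr {m k : ℕ} (hmk : m % 4 = k % 4) :
    auxI h ^ m = auxI h ^ k := by
  rw [pow_eq_pow_mod m (hI4 h), pow_eq_pow_mod k (hI4 h), hmk]

private lemma hIJcomm : auxI h * auxJ h = auxJ h * auxI h ^ 3 := by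
  rw [hI3 h, mul_neg, ← hIJ h]

private lemma hpowJ (m : ℕ) : auxI h ^ m * auxJ h = auxJ h * auxI h ^ (3 * m) := by
  induction m with
  | zero => simp
  | succ m ih =>
    rw [pow_succ, mul_assoc, hIJcomm h, ← mul_assoc, ih, mul_assoc, ← pow_add]
    ring_nf

private lemma negi : ∀ i : ZMod (2*2), -i = 3 * i := by decide

/-- the raw map -/
private def auxF (h : a ^ 2 + b ^ 2 + 1 = 0) : QuaternionGroup 2 → GL (Fin 2) K
  | QuaternionGroup.a i => auxI h ^ i.val
  | QuaternionGroup.xa i => auxJ h * auxI h ^ i.val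

private lemma auxF_mul (x y : QuaternionGroup 2) :
    auxF h (x * y) = auxF h x * auxF h y := by
  have v3 : ((3 : ZMod (2*2))).val = 3 := by decide
  have v2 : (((2 : ℕ) : ZMod (2*2))).val = 2 := by decide
  rcases x with i | i <;> rcases y with j | j
  · rw [QuaternionGroup.a_mul_a]
    show auxI h ^ (i + j).val = auxI h ^ i.val * auxI h ^ j.val
    rw [← pow_add]
    refine powCongr h ?_
    rw [ZMod.val_add]
    omega
  · rw [QuaternionGroup.a_mul_xa]
    show auxJ h * auxI h ^ (j - i).val = auxI h ^ i.val * (auxJ h * auxI h ^ j.val)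
    rw [← mul_assoc, hpowJ h, mul_assoc, ← pow_add]
    congr 1
    refine powCongr h ?_
    have e : j - i = 3 * i + j := by rw [sub_eq_add_neg, negi i, add_comm]
    rw [e, ZMod.val_add, ZMod.val_mul, v3]
    omega
  · rw [QuaternionGroup.xa_mul_a]
    show auxJ h * auxI h ^ (i + j).val = auxJ h * auxI h ^ i.val * auxI h ^ j.val
    rw [mul_assoc, ← pow_add]
    congr 1
    refine powCongr h ?_
    rw [ZMod.val_add]
    omega
  · rw [QuaternionGroup.xa_mul_xa]
    show auxI h ^ ((((2:ℕ) : ZMod (2*2)) + j - i).val)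
        = auxJ h * auxI h ^ i.val * (auxJ h * auxI h ^ j.val)
    have hr : auxJ h * auxI h ^ i.val * (auxJ h * auxI h ^ j.val)
        = -(auxI h ^ (3 * i.val + j.val)) := by
      rw [mul_assoc, ← mul_assoc (auxI h ^ i.val), hpowJ h, ← mul_assoc, ← mul_assoc,
        hJ2 h, mul_assoc, ← pow_add, neg_one_mul]
    have hl : auxI h ^ ((((2:ℕ) : ZMod (2*2)) + j - i).val)
        = auxI h ^ (2 + (3 * i.val + j.val)) := by
      refine powCongr h ?_
      have e : ((2:ℕ) : ZMod (2*2)) + j - i = ((2:ℕ) : ZMod (2*2)) + j + 3 * i := by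
        rw [sub_eq_add_neg, negi i]
      rw [e, ZMod.val_add, ZMod.val_add, ZMod.val_mul, v3, v2]
      omega
    rw [hl, pow_add, hIsq h, neg_one_mul, hr]

end Q8Aux

/-- If `a² + b² + 1 = 0` has a solution in a field `K` of characteristic 0,
then `i ↦ [[a,b],[b,−a]]`, `j ↦ [[b,−a],[−a,−b]]`, `k = ij ↦ [[0,1],[−1,0]]` defines a
`2`-dimensional (faithful, hence realizing the `2`-dimensional irreducible)
representation of `Q₈` over `K`. -/


theorem quaternionGroup_definedOver_of_sum_sq
    (K : Type*) [Field K] [CharZero K] (a b : K) (h : a ^ 2 + b ^ 2 + 1 = 0) :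
    ∃ π : QuaternionGroup 2 →* GL (Fin 2) K,
      (π (QuaternionGroup.a 1) : Matrix (Fin 2) (Fin 2) K) = !![a, b; b, -a] ∧
      (π (QuaternionGroup.xa 0) : Matrix (Fin 2) (Fin 2) K) = !![b, -a; -a, -b] ∧
      (π (QuaternionGroup.a 1 * QuaternionGroup.xa 0) : Matrix (Fin 2) (Fin 2) K)
          = !![0, 1; -1, 0] ∧
      Function.Injective π := by
  have hneg : (-1 : GL (Fin 2) K) ≠ 1 := by
    intro hc
    have h00 := congrArg (fun u : GL (Fin 2) K => (u : Matrix (Fin 2) (Fin 2) K) 0 0) hc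
    simp [Matrix.one_apply] at h00
    exact two_ne_zero (by linear_combination -h00 : (2:K) = 0)
  refine ⟨MonoidHom.mk' (auxF h) (auxF_mul h), ?_, ?_, ?_, ?_⟩
  · have e : auxF h (QuaternionGroup.a 1) = auxI h := by
      show auxI h ^ ((1 : ZMod (2*2)).val) = auxI h
      rw [show ((1 : ZMod (2*2))).val = 1 by decide, pow_one]
    show ((auxF h (QuaternionGroup.a 1) : GL (Fin 2) K) : Matrix (Fin 2) (Fin 2) K) = _
    rw [e]; rfl
  · have e : auxF h (QuaternionGroup.xa 0) = auxJ h := by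
      show auxJ h * auxI h ^ ((0 : ZMod (2*2)).val) = auxJ h
      rw [show ((0 : ZMod (2*2))).val = 0 by decide, pow_zero, mul_one]
    show ((auxF h (QuaternionGroup.xa 0) : GL (Fin 2) K) : Matrix (Fin 2) (Fin 2) K) = _
    rw [e]; rfl
  · have e1 : auxF h (QuaternionGroup.a 1) = auxI h := by
      show auxI h ^ ((1 : ZMod (2*2)).val) = auxI h
      rw [show ((1 : ZMod (2*2))).val = 1 by decide, pow_one]
    have e2 : auxF h (QuaternionGroup.xa 0) = auxJ h := by
      show auxJ h * auxI h ^ ((0 : ZMod (2*2)).val) = auxJ h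
      rw [show ((0 : ZMod (2*2))).val = 0 by decide, pow_zero, mul_one]
    rw [_root_.map_mul]
    show (((auxF h (QuaternionGroup.a 1) * auxF h (QuaternionGroup.xa 0)) : GL (Fin 2) K) :
        Matrix (Fin 2) (Fin 2) K) = _
    rw [e1, e2, Units.val_mul]
    exact auxMiMj h
  · rw [injective_iff_map_eq_one]
    rintro (i | i) hx
    · have hx' : auxI h ^ i.val = 1 := hx
      have hIval : i.val < 4 := ZMod.val_lt i
      have hI1 : auxI h ≠ 1 := by
        intro hc
        exact hneg (by rw [← hI2 h, hc, mul_one])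
      have key : i.val = 0 := by
        have hcases : i.val = 0 ∨ i.val = 1 ∨ i.val = 2 ∨ i.val = 3 := by omega
        rcases hcases with hv | hv | hv | hv <;> rw [hv] at hx'
        · exact hv
        · exfalso; apply hI1; rwa [pow_one] at hx'
        · exfalso; apply hneg; rw [← hIsq h]; exact hx'
        · exfalso
          apply hneg
          have h3 : -auxI h = 1 := by rw [← hI3 h]; exact hx'
          have hA : auxI h = -1 := by rw [← neg_neg (auxI h), h3]
          rw [← hI2 h, hA, neg_mul_neg, one_mul]
      have hi0 : i = 0 := by
        have := (ZMod.val_eq_zero i)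
        exact this.mp key
      rw [hi0]
      rfl
    · exfalso
      have hx' : auxF h (QuaternionGroup.xa i) = 1 := hx
      have h2 : auxF h (QuaternionGroup.xa i * QuaternionGroup.xa i) = 1 := by
        rw [auxF_mul h, hx', one_mul]
      rw [QuaternionGroup.xa_mul_xa] at h2
      have e : ((2:ℕ) : ZMod (2*2)) + i - i = ((2:ℕ) : ZMod (2*2)) := by ring
      rw [e] at h2
      have h2' : auxI h ^ ((((2:ℕ)) : ZMod (2*2)).val) = 1 := h2
      rw [show (((2:ℕ)) : ZMod (2*2)).val = 2 by decide, hIsq h] at h2'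
      exact hneg h2'

end
end

section
/- Let G be a finite group (more generally, a locally profinite group) and let ψ be a character of a subgroup N with values in roots of unity such that the induced representation Ind_N^G(ψ) is considered over ℂ. If Ind_N^G(ψ) is defined over ℚ and π is an irreducible subrepresentation appearing with multiplicity one, then π is defined over its field of rationality ℚ(π). -/
open Matrix

noncomputable section

variable {G : Type*} [Group G] {n : ℕ}

/-- The space of `G`-intertwiners from `π` to `ρ`. -/
def intertwiners {G : Type*} [Group G] {n N : ℕ}
    (π : G →* GL (Fin n) ℂ) (ρ : G →* GL (Fin N) ℂ) :
    Submodule ℂ ((Fin n → ℂ) →ₗ[ℂ] (Fin N → ℂ)) where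
  carrier := {f | ∀ g, f.comp ((π g : Matrix (Fin n) (Fin n) ℂ).mulVecLin)
      = ((ρ g : Matrix (Fin N) (Fin N) ℂ).mulVecLin).comp f}
  add_mem' := fun {f₁ f₂} h₁ h₂ g => by
    rw [LinearMap.add_comp, LinearMap.comp_add, h₁ g, h₂ g]
  zero_mem' := fun g => by rw [LinearMap.zero_comp, LinearMap.comp_zero]
  smul_mem' := fun c f hf g => by rw [LinearMap.smul_comp, LinearMap.comp_smul, hf g]

/-- The space of the representation of `G` induced from a character `ψ` of a
subgroup `H`: functions `f : G → ℂ` with `f (h * g) = ψ h * f g`, on which `G` acts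
by right translation. -/
def inducedSpace {G : Type*} [Group G] (H : Subgroup G) (ψ : H →* ℂˣ) :
    Submodule ℂ (G → ℂ) where
  carrier := {f | ∀ (x : H) (g : G), f ((x : G) * g) = (ψ x : ℂ) * f g}
  add_mem' := fun {f₁ f₂} h₁ h₂ x g => by
    simp only [Pi.add_apply, h₁ x g, h₂ x g]; ring
  zero_mem' := fun x g => by simp
  smul_mem' := fun c f hf x g => by
    simp only [Pi.smul_apply, smul_eq_mul, hf x g]; ring

/-- Right translation action of `G` on the induced space. -/
def indAct {G : Type*} [Group G] (H : Subgroup G) (ψ : H →* ℂˣ) (h : G) :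
    inducedSpace H ψ →ₗ[ℂ] inducedSpace H ψ where
  toFun f := ⟨fun g => (f : G → ℂ) (g * h),
    fun x g => by simpa [mul_assoc] using f.2 x (g * h)⟩
  map_add' f₁ f₂ := by apply Subtype.ext; rfl
  map_smul' c f := by apply Subtype.ext; rfl


/-!
Take `ρ` with rational entries and a nonzero intertwiner `A : π → ρ`. Irreducibility makes `A`
injective, so some `n` rows of `A` form an invertible matrix `R`, and `R π R⁻¹` is a block of
rows of `ρ · A R⁻¹`. If `π^σ ≅ π` via `M`, then `σ(A) M⁻¹` is again an intertwiner `π → ρ`, so by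
multiplicity one `σ(A) = A N` with `N` invertible; as `A R⁻¹` does not change under `A ↦ A N`,
it is fixed by `σ`. Hence `R π R⁻¹` has entries in `ℚ(π)`.
-/

namespace Matrix

variable {K L : Type*} [Field K] [Field L]

theorem map_inv {ι F : Type*} [Fintype ι] [DecidableEq ι] [FunLike F K L] [RingHomClass F K L]
    (f : F) (A : Matrix ι ι K) : A⁻¹.map f = (A.map f)⁻¹ := by
  have hdet : (A.map f).det = f A.det := (RingHom.map_det (f : K →+* L) A).symm
  have hadj : (A.map f).adjugate = A.adjugate.map f := (RingHom.map_adjugate (f : K →+* L) A).symm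
  rw [inv_def, inv_def, Ring.inverse_eq_inv', Ring.inverse_eq_inv', hdet, hadj, ← map_inv₀ f]
  ext i j
  simp

theorem mul_inv_submatrix_mul_of_isUnit {ι κ : Type*} [Fintype κ] [DecidableEq κ]
    (A : Matrix ι κ K) {N : Matrix κ κ K} (hN : IsUnit N.det) (f : κ → ι) :
    A * N * ((A * N).submatrix f id)⁻¹ = A * (A.submatrix f id)⁻¹ := by
  have hsub : (A * N).submatrix f id = A.submatrix f id * N := rfl
  rw [hsub, mul_inv_rev, Matrix.mul_assoc, ← Matrix.mul_assoc N, mul_nonsing_inv N hN,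
    Matrix.one_mul]

theorem exists_isUnit_submatrix_of_injective {ι κ : Type*} [Fintype ι] [Fintype κ]
    [DecidableEq κ] (A : Matrix ι κ K) (hA : Function.Injective A.mulVecLin) :
    ∃ f : κ → ι, IsUnit (A.submatrix f id) := by
  obtain ⟨s, a, -, hspan, hli⟩ := exists_linearIndependent' K A.row
  have : Fintype s := @Fintype.ofFinite _ hli.finite
  have hcard : Fintype.card s = Fintype.card κ := by
    rw [← finrank_span_eq_card hli, hspan, ← rank_eq_finrank_span_row, rank,
      LinearMap.finrank_range_of_inj hA, Module.finrank_fintype_fun_eq_card]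
  let e := Fintype.equivOfCardEq hcard
  exact ⟨a ∘ e.symm, linearIndependent_rows_iff_isUnit.mp (hli.comp _ e.symm.injective)⟩

end Matrix

theorem RepEquiv.trans {π₁ π₂ π₃ : G →* GL (Fin n) ℂ} (h₁₂ : RepEquiv π₁ π₂)
    (h₂₃ : RepEquiv π₂ π₃) : RepEquiv π₁ π₃ := by
  obtain ⟨M, hM⟩ := h₁₂
  obtain ⟨N, hN⟩ := h₂₃
  exact ⟨N * M, fun g => by rw [← hN, ← hM]; group⟩

theorem repEquiv_conj (U : GL (Fin n) ℂ) (π : G →* GL (Fin n) ℂ) :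
    RepEquiv ((MulAut.conj U).toMonoidHom.comp π) π :=
  ⟨U⁻¹, fun g => by simp [mul_assoc]⟩

theorem DefinedOver.of_repEquiv {π π' : G →* GL (Fin n) ℂ} {K : Subfield ℂ}
    (hπ : DefinedOver π K) (h : RepEquiv π π') : DefinedOver π' K :=
  let ⟨π₀, h₀⟩ := hπ
  ⟨π₀, h₀.trans h⟩

theorem Matrix.GeneralLinearGroup.map_subtype_injective {L : Type*} [Field L]
    (K : Subfield L) : Function.Injective (map (n := Fin n) K.subtype) := fun _ _ h =>
  Units.ext <| Matrix.map_injective Subtype.val_injective (congrArg Units.val h)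

theorem Matrix.GeneralLinearGroup.mem_range_map_subtype {L : Type*} [Field L] {K : Subfield L}
    {M : GL (Fin n) L} (hM : ∀ i j, M i j ∈ K) (hM' : ∀ i j, M⁻¹ i j ∈ K) :
    M ∈ (map K.subtype).range := by
  let X : Matrix (Fin n) (Fin n) K := of fun i j => ⟨M i j, hM i j⟩
  let Y : Matrix (Fin n) (Fin n) K := of fun i j => ⟨M⁻¹ i j, hM' i j⟩
  have hinj : Function.Injective (K.subtype.mapMatrix : Matrix (Fin n) (Fin n) K →+* _) :=
    Matrix.map_injective Subtype.val_injective
  have hXY : X * Y = 1 := hinj <| by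
    rw [map_mul, map_one]; exact congrArg Units.val (mul_inv_cancel M)
  refine ⟨⟨X, Y, hXY, mul_eq_one_comm.mp hXY⟩, Units.ext ?_⟩
  ext i j
  rfl

theorem definedOver_of_forall_mem {π : G →* GL (Fin n) ℂ} {K : Subfield ℂ}
    (h : ∀ g i j, π g i j ∈ K) : DefinedOver π K := by
  have hrange : ∀ g, π g ∈ (Matrix.GeneralLinearGroup.map K.subtype).range := fun g =>
    Matrix.GeneralLinearGroup.mem_range_map_subtype (h g) (by simpa using h g⁻¹)
  let e := MonoidHom.ofInjective (Matrix.GeneralLinearGroup.map_subtype_injective (n := n) K)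
  refine ⟨e.symm.toMonoidHom.comp (π.codRestrict _ hrange), 1, fun g => ?_⟩
  simp [e, MonoidHom.apply_ofInjective_symm]

theorem definedOver_of_conj_mem {π : G →* GL (Fin n) ℂ} {K : Subfield ℂ} (U : GL (Fin n) ℂ)
    (h : ∀ g i j, (U * π g * U⁻¹ : GL (Fin n) ℂ) i j ∈ K) : DefinedOver π K :=
  (definedOver_of_forall_mem (π := (MulAut.conj U).toMonoidHom.comp π) h).of_repEquiv
    (repEquiv_conj U π)

theorem coe_repConj_apply (σ : ℂ ≃+* ℂ) (π : G →* GL (Fin n) ℂ) (g : G) :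
    (repConj σ π g : Matrix (Fin n) (Fin n) ℂ) = (π g : Matrix (Fin n) (Fin n) ℂ).map σ :=
  rfl

theorem repConj_map_subtype_bot {m : ℕ} (σ : ℂ ≃+* ℂ)
    (ρ₀ : G →* GL (Fin m) (⊥ : Subfield ℂ)) :
    repConj σ ((Matrix.GeneralLinearGroup.map (⊥ : Subfield ℂ).subtype).comp ρ₀)
      = (Matrix.GeneralLinearGroup.map (⊥ : Subfield ℂ).subtype).comp ρ₀ := by
  have hσ : (σ : ℂ →+* ℂ).comp (⊥ : Subfield ℂ).subtype = (⊥ : Subfield ℂ).subtype :=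
    RingHom.ext fun z => (bot_le : ⊥ ≤ RingHom.eqLocusField (σ : ℂ →+* ℂ) (RingHom.id ℂ)) z.2
  rw [repConj, ← MonoidHom.comp_assoc, ← Matrix.GeneralLinearGroup.map_comp, hσ]

section Intertwiners

variable {m k : ℕ}

def matIntertwiners (π : G →* GL (Fin n) ℂ) (ρ : G →* GL (Fin m) ℂ) :
    Submodule ℂ (Matrix (Fin m) (Fin n) ℂ) where
  carrier := {A | ∀ g, A * (π g : Matrix (Fin n) (Fin n) ℂ) = (ρ g : Matrix (Fin m) (Fin m) ℂ) * A}
  add_mem' hA hB g := by rw [Matrix.add_mul, Matrix.mul_add, hA g, hB g]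
  zero_mem' g := by rw [Matrix.zero_mul, Matrix.mul_zero]
  smul_mem' c A hA g := by rw [Matrix.smul_mul, Matrix.mul_smul, hA g]

variable {π : G →* GL (Fin n) ℂ} {ρ : G →* GL (Fin m) ℂ}

theorem mulVecLin_mem_intertwiners {A : Matrix (Fin m) (Fin n) ℂ} :
    A.mulVecLin ∈ intertwiners π ρ ↔ A ∈ matIntertwiners π ρ :=
  forall_congr' fun g => by
    rw [← Matrix.mulVecLin_mul, ← Matrix.mulVecLin_mul]
    exact Matrix.toLin'.injective.eq_iff

theorem finrank_matIntertwiners :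
    Module.finrank ℂ (matIntertwiners π ρ) = Module.finrank ℂ (intertwiners π ρ) := by
  have hmap : (matIntertwiners π ρ).map (Matrix.toLin' : _ ≃ₗ[ℂ] _).toLinearMap
      = intertwiners π ρ := by
    ext T
    rw [Submodule.map_equiv_eq_comap_symm, Submodule.mem_comap, ← mulVecLin_mem_intertwiners]
    exact Iff.of_eq (congrArg (· ∈ intertwiners π ρ) (Matrix.toLin'_toMatrix' T))
  rw [← hmap, LinearEquiv.finrank_map_eq]

theorem mul_mem_matIntertwiners {τ : G →* GL (Fin k) ℂ} {B : Matrix (Fin k) (Fin m) ℂ}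
    {A : Matrix (Fin m) (Fin n) ℂ} (hB : B ∈ matIntertwiners ρ τ)
    (hA : A ∈ matIntertwiners π ρ) : B * A ∈ matIntertwiners π τ := fun g => by
  rw [Matrix.mul_assoc, hA g, ← Matrix.mul_assoc, hB g, Matrix.mul_assoc]

theorem coe_mem_matIntertwiners_of_conj {ρ' : G →* GL (Fin m) ℂ} {M : GL (Fin m) ℂ}
    (hM : ∀ g, M * ρ g * M⁻¹ = ρ' g) : (M : Matrix (Fin m) (Fin m) ℂ) ∈ matIntertwiners ρ ρ' :=
  fun g => by rw [← Units.val_mul, ← Units.val_mul, ← hM g, inv_mul_cancel_right]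

theorem coe_inv_mem_matIntertwiners_of_conj {ρ' : G →* GL (Fin m) ℂ} {M : GL (Fin m) ℂ}
    (hM : ∀ g, M * ρ g * M⁻¹ = ρ' g) :
    ((M⁻¹ : GL (Fin m) ℂ) : Matrix (Fin m) (Fin m) ℂ) ∈ matIntertwiners ρ' ρ :=
  fun g => by rw [← Units.val_mul, ← Units.val_mul, ← hM g]; group

def matIntertwinersEquivOfConj {ρ' : G →* GL (Fin m) ℂ} {M : GL (Fin m) ℂ}
    (hM : ∀ g, M * ρ g * M⁻¹ = ρ' g) : matIntertwiners π ρ ≃ₗ[ℂ] matIntertwiners π ρ' where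
  toFun A := ⟨(M : Matrix (Fin m) (Fin m) ℂ) * (A : Matrix (Fin m) (Fin n) ℂ),
    mul_mem_matIntertwiners (coe_mem_matIntertwiners_of_conj hM) A.2⟩
  invFun A := ⟨((M⁻¹ : GL (Fin m) ℂ) : Matrix (Fin m) (Fin m) ℂ) * (A : Matrix (Fin m) (Fin n) ℂ),
    mul_mem_matIntertwiners (coe_inv_mem_matIntertwiners_of_conj hM) A.2⟩
  map_add' A B := Subtype.ext (Matrix.mul_add _ _ _)
  map_smul' c A := Subtype.ext (Matrix.mul_smul _ c _)
  left_inv A := Subtype.ext <| by simp [← Matrix.mul_assoc]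
  right_inv A := Subtype.ext <| by simp [← Matrix.mul_assoc]

theorem finrank_matIntertwiners_eq_of_repEquiv {ρ' : G →* GL (Fin m) ℂ} (h : RepEquiv ρ ρ') :
    Module.finrank ℂ (matIntertwiners π ρ) = Module.finrank ℂ (matIntertwiners π ρ') :=
  let ⟨_, hM⟩ := h
  (matIntertwinersEquivOfConj hM).finrank_eq

theorem map_mem_matIntertwiners_repConj (σ : ℂ ≃+* ℂ) {A : Matrix (Fin m) (Fin n) ℂ}
    (hA : A ∈ matIntertwiners π ρ) :
    A.map σ ∈ matIntertwiners (repConj σ π) (repConj σ ρ) := fun g => by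
  rw [coe_repConj_apply, coe_repConj_apply, ← Matrix.map_mul, ← Matrix.map_mul, hA g]

theorem IsIrreducibleRep.injective_of_mem_matIntertwiners (hπ : IsIrreducibleRep π)
    {A : Matrix (Fin m) (Fin n) ℂ} (hA : A ∈ matIntertwiners π ρ) (hA0 : A ≠ 0) :
    Function.Injective A.mulVecLin := by
  have hstable : ∀ g, (LinearMap.ker A.mulVecLin).map (π g : Matrix _ _ ℂ).mulVecLin
      ≤ LinearMap.ker A.mulVecLin := by
    rintro g _ ⟨v, hv, rfl⟩
    rw [SetLike.mem_coe, LinearMap.mem_ker] at hv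
    rw [LinearMap.mem_ker, ← LinearMap.comp_apply, ← Matrix.mulVecLin_mul, hA g,
      Matrix.mulVecLin_mul, LinearMap.comp_apply, hv, map_zero]
  rcases hπ _ hstable with hbot | htop
  · exact LinearMap.ker_eq_bot.mp hbot
  · exact absurd (Matrix.toLin'.map_eq_zero_iff.mp (LinearMap.ker_eq_top.mp htop)) hA0

end Intertwiners

section Descent

variable {m : ℕ} {π : G →* GL (Fin n) ℂ} {ρ : G →* GL (Fin m) ℂ} {A : Matrix (Fin m) (Fin n) ℂ}

theorem submatrix_conj_eq_of_mem_matIntertwiners (hA : A ∈ matIntertwiners π ρ)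
    (f : Fin n → Fin m) (g : G) :
    A.submatrix f id * (π g : Matrix (Fin n) (Fin n) ℂ) * (A.submatrix f id)⁻¹
      = ((ρ g : Matrix (Fin m) (Fin m) ℂ) * (A * (A.submatrix f id)⁻¹)).submatrix f id := by
  rw [← Matrix.mul_assoc, ← hA g]
  rfl

theorem map_mul_inv_submatrix_eq_self {σ : ℂ ≃+* ℂ} (hρ : repConj σ ρ = ρ)
    (hσ : RepEquiv (repConj σ π) π) (hmult : Module.finrank ℂ (matIntertwiners π ρ) = 1)
    (hA : A ∈ matIntertwiners π ρ) (hA0 : A ≠ 0) (f : Fin n → Fin m) :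
    (A * (A.submatrix f id)⁻¹).map σ = A * (A.submatrix f id)⁻¹ := by
  obtain ⟨M, hM⟩ := hσ
  have hAσ : A.map σ * ((M⁻¹ : GL (Fin n) ℂ) : Matrix (Fin n) (Fin n) ℂ) ∈ matIntertwiners π ρ :=
    mul_mem_matIntertwiners (hρ ▸ map_mem_matIntertwiners_repConj σ hA)
      (coe_inv_mem_matIntertwiners_of_conj hM)
  obtain ⟨c, hc⟩ := exists_smul_eq_of_finrank_eq_one hmult
    (x := ⟨A, hA⟩) (by simpa using hA0) ⟨_, hAσ⟩
  have hAσ_eq : A.map σ = A * (c • (M : Matrix (Fin n) (Fin n) ℂ)) := by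
    have := congrArg (· * (M : Matrix (Fin n) (Fin n) ℂ)) (congrArg Subtype.val hc)
    simpa [Matrix.mul_assoc] using this.symm
  have hc0 : c ≠ 0 := by
    rintro rfl
    exact hA0 (Matrix.map_injective σ.injective (by simpa using hAσ_eq))
  have hN : IsUnit (c • (M : Matrix (Fin n) (Fin n) ℂ)).det := by
    rw [Matrix.det_smul]
    exact (hc0.isUnit.pow _).mul ((Matrix.isUnit_iff_isUnit_det _).mp M.isUnit)
  rw [Matrix.map_mul, Matrix.map_inv, ← Matrix.submatrix_map, hAσ_eq,
    Matrix.mul_inv_submatrix_mul_of_isUnit A hN]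

theorem definedOver_fieldOfRationality_of_finrank_matIntertwiners_eq_one
    (hρ : ∀ σ : ℂ ≃+* ℂ, repConj σ ρ = ρ) (hπ : IsIrreducibleRep π)
    (hmult : Module.finrank ℂ (matIntertwiners π ρ) = 1) :
    DefinedOver π (fieldOfRationality π) := by
  obtain ⟨⟨A, hA⟩, hA0⟩ := Module.finrank_pos_iff_exists_ne_zero.mp (hmult ▸ Nat.one_pos)
  replace hA0 : A ≠ 0 := fun h => hA0 (Subtype.ext h)
  obtain ⟨f, hR⟩ :=
    A.exists_isUnit_submatrix_of_injective (hπ.injective_of_mem_matIntertwiners hA hA0)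
  refine definedOver_of_conj_mem hR.unit fun g i j σ hσ => ?_
  set X := (ρ g : Matrix (Fin m) (Fin m) ℂ) * (A * (A.submatrix f id)⁻¹)
  have hentry : (hR.unit * π g * hR.unit⁻¹ : GL (Fin n) ℂ) i j = X (f i) j := by
    rw [Units.val_mul, Units.val_mul, Matrix.coe_units_inv, hR.unit_spec,
      submatrix_conj_eq_of_mem_matIntertwiners hA f g]
    rfl
  have hX : X.map σ = X := by
    rw [Matrix.map_mul, ← coe_repConj_apply, hρ σ,
      map_mul_inv_submatrix_eq_self (hρ σ) hσ hmult hA hA0 f]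
  rw [hentry]
  exact congrFun (congrFun hX (f i)) j

end Descent

theorem definedOver_field_of_rationality_of_mult_one_in_induced_general
    {G : Type*} [Group G]
    {m : ℕ} (ρ : G →* GL (Fin m) ℂ)
    (hQ : DefinedOver ρ ⊥)
    {n : ℕ} (π : G →* GL (Fin n) ℂ) (hirr : IsIrreducibleRep π)
    (hmult : Module.finrank ℂ (intertwiners π ρ) = 1) :
    DefinedOver π (fieldOfRationality π) := by
  obtain ⟨ρ₀, hρ₀⟩ := hQ
  refine definedOver_fieldOfRationality_of_finrank_matIntertwiners_eq_one
    (fun σ => repConj_map_subtype_bot σ ρ₀) hirr ?_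
  rw [finrank_matIntertwiners_eq_of_repEquiv hρ₀, finrank_matIntertwiners, hmult]

/-- If the induction `Ind_H^G ψ` of a root-of-unity-valued character
`ψ` of a subgroup `H ≤ G` (realized as a matrix representation `ρ`) is defined over
`ℚ`, and `π` is an irreducible representation appearing in it with multiplicity one,
then `π` is defined over its field of rationality `ℚ(π)`. -/
theorem definedOver_field_of_rationality_of_mult_one_in_induced
    {G : Type*} [Group G] (H : Subgroup G) (ψ : H →* ℂˣ)
    (hroots : ∀ x : H, ∃ k : ℕ, 0 < k ∧ ψ x ^ k = 1)
    {m : ℕ} (ρ : G →* GL (Fin m) ℂ)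
    (hInd : ∃ e : (Fin m → ℂ) ≃ₗ[ℂ] inducedSpace H ψ,
      ∀ (h : G) (x : Fin m → ℂ),
        e ((ρ h : Matrix (Fin m) (Fin m) ℂ).mulVecLin x) = indAct H ψ h (e x))
    (hQ : DefinedOver ρ ⊥)
    {n : ℕ} (π : G →* GL (Fin n) ℂ) (hirr : IsIrreducibleRep π)
    (hmult : Module.finrank ℂ (intertwiners π ρ) = 1) :
    DefinedOver π (fieldOfRationality π) :=
  definedOver_field_of_rationality_of_mult_one_in_induced_general ρ hQ π hirr hmult
end
end
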